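/- arXiv:2511.01538 — 3 statements merged into one kernel-verified Lean document; each statement's English description precedes it below -/
import Mathlib

section
/- Let P and Z be real symmetric n×n matrices such that R(P) and R(P+Z) are invertible. Then G(P+Z) = G(P) + Z A_{K(P)} + A_{K(P)}^T Z + Σ_{l=1}^r C_{l,K(P)}^T Z C_{l,K(P)} − N(P,Z)^T R(P+Z)^{-1} N(P,Z). -/
open Matrix BigOperators

noncomputable section

/-- Mean-square stability of the tuple `(F, G_1, …, G_r)` via the Lyapunov characterization. -/
def MSStable {n r : ℕ} (F : Matrix (Fin n) (Fin n) ℝ)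
    (G : Fin r → Matrix (Fin n) (Fin n) ℝ) : Prop :=
  ∃ X : Matrix (Fin n) (Fin n) ℝ, X.PosDef ∧
    (-(X * F + Fᵀ * X + ∑ l, (G l)ᵀ * X * G l)).PosDef

/-- Stochastic detectability of the system `[E_0, …, E_r; F, G_1, …, G_r]`. -/
def StochDetectable {n q r : ℕ} (E0 : Matrix (Fin q) (Fin n) ℝ)
    (E : Fin r → Matrix (Fin q) (Fin n) ℝ)
    (F : Matrix (Fin n) (Fin n) ℝ) (G : Fin r → Matrix (Fin n) (Fin n) ℝ) : Prop :=
  ∃ Θ : Matrix (Fin n) (Fin q) ℝ, MSStable (F + Θ * E0) (fun l => G l + Θ * E l)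

/-- The data of the zero-sum linear-quadratic stochastic differential game. -/
structure GameData (n m1 m2 r : ℕ) where
  A : Matrix (Fin n) (Fin n) ℝ
  C : Fin r → Matrix (Fin n) (Fin n) ℝ
  B1 : Matrix (Fin n) (Fin m1) ℝ
  B2 : Matrix (Fin n) (Fin m2) ℝ
  D1 : Fin r → Matrix (Fin n) (Fin m1) ℝ
  D2 : Fin r → Matrix (Fin n) (Fin m2) ℝ
  Q : Matrix (Fin n) (Fin n) ℝ
  hQ : Q.IsSymm
  S1 : Matrix (Fin m1) (Fin n) ℝ
  S2 : Matrix (Fin m2) (Fin n) ℝ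
  R11 : Matrix (Fin m1) (Fin m1) ℝ
  R22 : Matrix (Fin m2) (Fin m2) ℝ
  R12 : Matrix (Fin m1) (Fin m2) ℝ
  hR11 : R11.IsSymm
  hR22 : R22.IsSymm

namespace GameData

variable {n m1 m2 r : ℕ} (g : GameData n m1 m2 r)

/-- The stacked weighting matrix `S = [S_1; S_2]`. -/
def Sw : Matrix (Fin m1 ⊕ Fin m2) (Fin n) ℝ := fromRows g.S1 g.S2

/-- The full weighting matrix `R = [[R_11, R_12],[R_21, R_22]]` with `R_21 = R_12ᵀ`. -/
def Rw : Matrix (Fin m1 ⊕ Fin m2) (Fin m1 ⊕ Fin m2) ℝ :=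
  fromBlocks g.R11 g.R12 g.R12ᵀ g.R22

/-- `S_1(P) = B_1ᵀ P + Σ_l D_{l,1}ᵀ P C_l + S_1`. -/
def S1P (P : Matrix (Fin n) (Fin n) ℝ) : Matrix (Fin m1) (Fin n) ℝ :=
  g.B1ᵀ * P + ∑ l, (g.D1 l)ᵀ * P * g.C l + g.S1

/-- `S_2(P) = B_2ᵀ P + Σ_l D_{l,2}ᵀ P C_l + S_2`. -/
def S2P (P : Matrix (Fin n) (Fin n) ℝ) : Matrix (Fin m2) (Fin n) ℝ :=
  g.B2ᵀ * P + ∑ l, (g.D2 l)ᵀ * P * g.C l + g.S2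

/-- `S(P) = [S_1(P); S_2(P)]`. -/
def SP (P : Matrix (Fin n) (Fin n) ℝ) : Matrix (Fin m1 ⊕ Fin m2) (Fin n) ℝ :=
  fromRows (g.S1P P) (g.S2P P)

/-- `R_11(P)`. -/
def R11P (P : Matrix (Fin n) (Fin n) ℝ) : Matrix (Fin m1) (Fin m1) ℝ :=
  g.R11 + ∑ l, (g.D1 l)ᵀ * P * g.D1 l

/-- `R_12(P)`. -/
def R12P (P : Matrix (Fin n) (Fin n) ℝ) : Matrix (Fin m1) (Fin m2) ℝ :=
  g.R12 + ∑ l, (g.D1 l)ᵀ * P * g.D2 l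

/-- `R_21(P)`. -/
def R21P (P : Matrix (Fin n) (Fin n) ℝ) : Matrix (Fin m2) (Fin m1) ℝ :=
  g.R12ᵀ + ∑ l, (g.D2 l)ᵀ * P * g.D1 l

/-- `R_22(P)`. -/
def R22P (P : Matrix (Fin n) (Fin n) ℝ) : Matrix (Fin m2) (Fin m2) ℝ :=
  g.R22 + ∑ l, (g.D2 l)ᵀ * P * g.D2 l

/-- `R(P)` assembled from its blocks. -/
def RP (P : Matrix (Fin n) (Fin n) ℝ) : Matrix (Fin m1 ⊕ Fin m2) (Fin m1 ⊕ Fin m2) ℝ :=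
  fromBlocks (g.R11P P) (g.R12P P) (g.R21P P) (g.R22P P)

/-- `K(P) = −R(P)⁻¹ S(P)` (stacked feedback gain). -/
def KP (P : Matrix (Fin n) (Fin n) ℝ) : Matrix (Fin m1 ⊕ Fin m2) (Fin n) ℝ :=
  -((g.RP P)⁻¹ * g.SP P)

/-- `K_1(P)`: the first block of `K(P)`. -/
def K1 (P : Matrix (Fin n) (Fin n) ℝ) : Matrix (Fin m1) (Fin n) ℝ :=
  (g.KP P).submatrix Sum.inl id

/-- `K_2(P)`: the second block of `K(P)`. -/
def K2 (P : Matrix (Fin n) (Fin n) ℝ) : Matrix (Fin m2) (Fin n) ℝ :=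
  (g.KP P).submatrix Sum.inr id

/-- `G(P) = PA + AᵀP + Σ_l C_lᵀ P C_l + Q − S(P)ᵀ R(P)⁻¹ S(P)`. -/
def GP (P : Matrix (Fin n) (Fin n) ℝ) : Matrix (Fin n) (Fin n) ℝ :=
  P * g.A + g.Aᵀ * P + ∑ l, (g.C l)ᵀ * P * g.C l + g.Q
    - (g.SP P)ᵀ * (g.RP P)⁻¹ * g.SP P

/-- `A_{K(P)} = A + B_1 K_1(P) + B_2 K_2(P)`. -/
def AK (P : Matrix (Fin n) (Fin n) ℝ) : Matrix (Fin n) (Fin n) ℝ :=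
  g.A + g.B1 * g.K1 P + g.B2 * g.K2 P

/-- `C_{l,K(P)} = C_l + D_{l,1} K_1(P) + D_{l,2} K_2(P)`. -/
def CK (P : Matrix (Fin n) (Fin n) ℝ) (l : Fin r) : Matrix (Fin n) (Fin n) ℝ :=
  g.C l + g.D1 l * g.K1 P + g.D2 l * g.K2 P

/-- `N_1(P,Z)`. -/
def N1 (P Z : Matrix (Fin n) (Fin n) ℝ) : Matrix (Fin m1) (Fin n) ℝ :=
  g.B1ᵀ * Z + ∑ l, (g.D1 l)ᵀ * Z * g.CK P l

/-- `N_2(P,Z)`. -/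
def N2 (P Z : Matrix (Fin n) (Fin n) ℝ) : Matrix (Fin m2) (Fin n) ℝ :=
  g.B2ᵀ * Z + ∑ l, (g.D2 l)ᵀ * Z * g.CK P l

/-- `N(P,Z) = [N_1(P,Z); N_2(P,Z)]`. -/
def NP (P Z : Matrix (Fin n) (Fin n) ℝ) : Matrix (Fin m1 ⊕ Fin m2) (Fin n) ℝ :=
  fromRows (g.N1 P Z) (g.N2 P Z)

/-- Membership in `Dom G`: `R_22(P) ≻ 0` and `R_11(P) ≺ 0`. -/
def MemDomG (P : Matrix (Fin n) (Fin n) ℝ) : Prop :=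
  (g.R22P P).PosDef ∧ (-(g.R11P P)).PosDef

/-- `Z` satisfies the inner Riccati equation at `P`. -/
def InnerRiccati (P Z : Matrix (Fin n) (Fin n) ℝ) : Prop :=
  g.GP P + Z * g.AK P + (g.AK P)ᵀ * Z + ∑ l, (g.CK P l)ᵀ * Z * g.CK P l
    - (g.N2 P Z)ᵀ * (g.R22P (P + Z))⁻¹ * g.N2 P Z = 0

/-- `A_L = A + B_1 K_1(0) + B_2 K_2(0) + B_2 L`. -/
def AL (L : Matrix (Fin m2) (Fin n) ℝ) : Matrix (Fin n) (Fin n) ℝ :=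
  g.A + g.B1 * g.K1 0 + g.B2 * g.K2 0 + g.B2 * L

/-- `C_{lL} = C_l + D_{l,1} K_1(0) + D_{l,2} K_2(0) + D_{l,2} L`. -/
def CL (L : Matrix (Fin m2) (Fin n) ℝ) (l : Fin r) : Matrix (Fin n) (Fin n) ℝ :=
  g.C l + g.D1 l * g.K1 0 + g.D2 l * g.K2 0 + g.D2 l * L

/-- `Q_L = Q − S(0)ᵀ R(0)⁻¹ S(0) + Lᵀ R_22 L`. -/
def QL (L : Matrix (Fin m2) (Fin n) ℝ) : Matrix (Fin n) (Fin n) ℝ :=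
  g.Q - (g.SP 0)ᵀ * (g.RP 0)⁻¹ * g.SP 0 + Lᵀ * g.R22 * L

/-- `S_L = R_12 L`. -/
def SL (L : Matrix (Fin m2) (Fin n) ℝ) : Matrix (Fin m1) (Fin n) ℝ := g.R12 * L

/-- The linear term `B_1ᵀ P + Σ_l D_{l,1}ᵀ P C_{lL} + S_L` in the `L`-Riccati equation. -/
def S1L (L : Matrix (Fin m2) (Fin n) ℝ) (P : Matrix (Fin n) (Fin n) ℝ) :
    Matrix (Fin m1) (Fin n) ℝ :=
  g.B1ᵀ * P + ∑ l, (g.D1 l)ᵀ * P * g.CL L l + g.SL L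

/-- Left-hand side of the algebraic Riccati equation associated with `L`. -/
def AREL (L : Matrix (Fin m2) (Fin n) ℝ) (P : Matrix (Fin n) (Fin n) ℝ) :
    Matrix (Fin n) (Fin n) ℝ :=
  P * g.AL L + (g.AL L)ᵀ * P + ∑ l, (g.CL L l)ᵀ * P * g.CL L l + g.QL L
    - (g.S1L L P)ᵀ * (g.R11P P)⁻¹ * g.S1L L P

/-- `K_L(P) = −(R_11 + Σ_l D_{l,1}ᵀ P D_{l,1})⁻¹ (B_1ᵀ P + Σ_l D_{l,1}ᵀ P C_{lL} + S_L)`. -/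
def KL (L : Matrix (Fin m2) (Fin n) ℝ) (P : Matrix (Fin n) (Fin n) ℝ) :
    Matrix (Fin m1) (Fin n) ℝ :=
  -((g.R11P P)⁻¹ * g.S1L L P)

/-- `P̃` is a stabilizing solution of the `L`-Riccati equation. -/
def IsStabSolL (L : Matrix (Fin m2) (Fin n) ℝ) (P : Matrix (Fin n) (Fin n) ℝ) : Prop :=
  P.IsSymm ∧ g.AREL L P = 0 ∧ (-(g.R11P P)).PosDef ∧
    MSStable (g.AL L + g.B1 * g.KL L P) (fun l => g.CL L l + g.D1 l * g.KL L P)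

/-- `L ∈ 𝒜`. -/
def MemA (L : Matrix (Fin m2) (Fin n) ℝ) : Prop :=
  MSStable (g.AL L) (g.CL L) ∧ ∃ P, g.IsStabSolL L P

end GameData

/-!
Write `R' = R(P+Z) = R(P) + ΔR` and `S' = S(P+Z) = S(P) + ΔS`; both maps are affine in `P`.
The gain `K = K(P)` satisfies `R(P) K = -S(P)` and `N(P,Z) = ΔS + ΔR K`, so `S' = N - R' K`.
Completing the square gives `S'ᵀ R'⁻¹ S' = Nᵀ R'⁻¹ N - Nᵀ K - Kᵀ N + Kᵀ R' K`, while
`S(P)ᵀ R(P)⁻¹ S(P) = Kᵀ R(P) K`. Hence the quadratic terms of `G(P+Z) - G(P)` contribute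
`ΔSᵀ K + Kᵀ ΔS + Kᵀ ΔR K - Nᵀ R'⁻¹ N`, and the first three summands are exactly what turns
`Z A + Aᵀ Z + Σ_l C_lᵀ Z C_l` into its closed-loop version with `A_{K(P)}` and `C_{l,K(P)}`.
-/

namespace Matrix

section Blocks

variable {α ι : Type*} {m₁ m₂ n n₁ n₂ : Type*}

lemma fromRows_add [Add α] (A₁ B₁ : Matrix m₁ n α) (A₂ B₂ : Matrix m₂ n α) :
    fromRows A₁ A₂ + fromRows B₁ B₂ = fromRows (A₁ + B₁) (A₂ + B₂) := by
  ext (i | i) j <;> rfl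

variable [AddCommMonoid α]

lemma fromRows_sum (s : Finset ι) (A₁ : ι → Matrix m₁ n α) (A₂ : ι → Matrix m₂ n α) :
    ∑ i ∈ s, fromRows (A₁ i) (A₂ i) = fromRows (∑ i ∈ s, A₁ i) (∑ i ∈ s, A₂ i) := by
  ext (i | i) j <;> simp [sum_apply]

lemma fromBlocks_sum (s : Finset ι) (A : ι → Matrix m₁ n₁ α) (B : ι → Matrix m₁ n₂ α)
    (C : ι → Matrix m₂ n₁ α) (D : ι → Matrix m₂ n₂ α) :
    ∑ i ∈ s, fromBlocks (A i) (B i) (C i) (D i) =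
      fromBlocks (∑ i ∈ s, A i) (∑ i ∈ s, B i) (∑ i ∈ s, C i) (∑ i ∈ s, D i) := by
  ext (i | i) (j | j) <;> simp [sum_apply]

end Blocks

section CompletingSquare

variable {α : Type*} [CommRing α] {m n : Type*} [Fintype m] [DecidableEq m]

lemma transpose_sub_mul_nonsing_inv_mul_sub {R : Matrix m m α} (hR : Rᵀ = R)
    (hRu : IsUnit R.det) (N K : Matrix m n α) :
    (N - R * K)ᵀ * R⁻¹ * (N - R * K) = Nᵀ * R⁻¹ * N - Nᵀ * K - Kᵀ * N + Kᵀ * R * K := by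
  rw [transpose_sub, transpose_mul, hR]
  simp only [Matrix.sub_mul, Matrix.mul_sub, Matrix.mul_assoc,
    nonsing_inv_mul_cancel_left (h := hRu), mul_nonsing_inv_cancel_left (h := hRu)]
  abel

lemma transpose_add_mul_nonsing_inv_add_mul_add {R ΔR : Matrix m m α} {S ΔS K : Matrix m n α}
    (hR : Rᵀ = R) (hΔR : ΔRᵀ = ΔR) (hRu : IsUnit R.det) (hR'u : IsUnit (R + ΔR).det)
    (hK : R * K = -S) :
    (S + ΔS)ᵀ * (R + ΔR)⁻¹ * (S + ΔS) =
      Sᵀ * R⁻¹ * S - ΔSᵀ * K - Kᵀ * ΔS - Kᵀ * ΔR * K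
        + (ΔS + ΔR * K)ᵀ * (R + ΔR)⁻¹ * (ΔS + ΔR * K) := by
  have hS : Sᵀ * R⁻¹ * S = Kᵀ * R * K := by
    simpa [hK] using transpose_sub_mul_nonsing_inv_mul_sub hR hRu 0 K
  have hS' : S + ΔS = (ΔS + ΔR * K) - (R + ΔR) * K := by
    rw [Matrix.add_mul, hK]
    abel
  rw [hS', transpose_sub_mul_nonsing_inv_mul_sub (by rw [transpose_add, hR, hΔR]) hR'u, hS]
  generalize (ΔS + ΔR * K)ᵀ * (R + ΔR)⁻¹ * (ΔS + ΔR * K) = X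
  simp only [transpose_add, transpose_mul, hΔR, Matrix.add_mul, Matrix.mul_add, Matrix.mul_assoc]
  abel

end CompletingSquare

end Matrix

namespace GameData

variable {n m1 m2 r : ℕ} (g : GameData n m1 m2 r)

def Bw : Matrix (Fin n) (Fin m1 ⊕ Fin m2) ℝ := fromCols g.B1 g.B2

def Dw (l : Fin r) : Matrix (Fin n) (Fin m1 ⊕ Fin m2) ℝ := fromCols (g.D1 l) (g.D2 l)

def SPLin (Z : Matrix (Fin n) (Fin n) ℝ) : Matrix (Fin m1 ⊕ Fin m2) (Fin n) ℝ :=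
  g.Bwᵀ * Z + ∑ l, (g.Dw l)ᵀ * Z * g.C l

def RPLin (Z : Matrix (Fin n) (Fin n) ℝ) : Matrix (Fin m1 ⊕ Fin m2) (Fin m1 ⊕ Fin m2) ℝ :=
  ∑ l, (g.Dw l)ᵀ * Z * g.Dw l

variable (P Z : Matrix (Fin n) (Fin n) ℝ)

lemma SP_eq : g.SP P = g.SPLin P + g.Sw := by
  simp only [SP, S1P, S2P, SPLin, Sw, Bw, Dw, transpose_fromCols, fromRows_mul, fromRows_sum,
    fromRows_add]

lemma RP_eq : g.RP P = g.Rw + g.RPLin P := by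
  simp only [RP, R11P, R12P, R21P, R22P, RPLin, Rw, Dw, transpose_fromCols, fromRows_mul,
    mul_fromCols, fromCols_fromRows_eq_fromBlocks, fromBlocks_sum, fromBlocks_add]

lemma SP_add : g.SP (P + Z) = g.SP P + g.SPLin Z := by
  simp only [SP_eq, SPLin, Matrix.mul_add, Matrix.add_mul, Finset.sum_add_distrib]
  abel

lemma RP_add : g.RP (P + Z) = g.RP P + g.RPLin Z := by
  simp only [RP_eq, RPLin, Matrix.mul_add, Matrix.add_mul, Finset.sum_add_distrib]
  abel

lemma KP_eq_fromRows : g.KP P = fromRows (g.K1 P) (g.K2 P) :=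
  (fromRows_toRows _).symm

lemma AK_eq : g.AK P = g.A + g.Bw * g.KP P := by
  rw [AK, Bw, KP_eq_fromRows, fromCols_mul_fromRows, add_assoc]

lemma CK_eq (l : Fin r) : g.CK P l = g.C l + g.Dw l * g.KP P := by
  rw [CK, Dw, KP_eq_fromRows, fromCols_mul_fromRows, add_assoc]

lemma NP_eq : g.NP P Z = g.SPLin Z + g.RPLin Z * g.KP P := by
  have hNP : g.NP P Z = g.Bwᵀ * Z + ∑ l, (g.Dw l)ᵀ * Z * g.CK P l := by
    simp only [NP, N1, N2, Bw, Dw, transpose_fromCols, fromRows_mul, fromRows_sum, fromRows_add]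
  simp only [hNP, SPLin, RPLin, CK_eq, Matrix.mul_add, Finset.sum_add_distrib, Matrix.sum_mul,
    Matrix.mul_assoc, add_assoc]

variable {P Z}

lemma RPLin_transpose (hZ : Z.IsSymm) : (g.RPLin Z)ᵀ = g.RPLin Z := by
  simp only [RPLin, transpose_sum, transpose_mul, transpose_transpose, hZ.eq, Matrix.mul_assoc]

lemma SPLin_transpose (hZ : Z.IsSymm) :
    (g.SPLin Z)ᵀ = Z * g.Bw + ∑ l, (g.C l)ᵀ * Z * g.Dw l := by
  simp only [SPLin, transpose_add, transpose_sum, transpose_mul, transpose_transpose, hZ.eq,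
    Matrix.mul_assoc]

lemma RP_transpose (hP : P.IsSymm) : (g.RP P)ᵀ = g.RP P := by
  have hRw : g.Rwᵀ = g.Rw := by
    rw [Rw, fromBlocks_transpose, transpose_transpose, g.hR11.eq, g.hR22.eq]
  rw [RP_eq, transpose_add, hRw, g.RPLin_transpose hP]

lemma RP_mul_KP (hRP : IsUnit (g.RP P).det) : g.RP P * g.KP P = -g.SP P := by
  rw [KP, Matrix.mul_neg, mul_nonsing_inv_cancel_left (h := hRP)]

lemma GP_add : g.GP (P + Z) = g.GP P + (Z * g.A + g.Aᵀ * Z + ∑ l, (g.C l)ᵀ * Z * g.C l)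
    + ((g.SP P)ᵀ * (g.RP P)⁻¹ * g.SP P - (g.SP (P + Z))ᵀ * (g.RP (P + Z))⁻¹ * g.SP (P + Z)) := by
  simp only [GP, Matrix.mul_add, Matrix.add_mul, Finset.sum_add_distrib]
  abel

variable (P) in
lemma closedLoop_lyapunov (hZ : Z.IsSymm) :
    Z * g.AK P + (g.AK P)ᵀ * Z + ∑ l, (g.CK P l)ᵀ * Z * g.CK P l =
      Z * g.A + g.Aᵀ * Z + ∑ l, (g.C l)ᵀ * Z * g.C l
        + ((g.SPLin Z)ᵀ * g.KP P + (g.KP P)ᵀ * g.SPLin Z + (g.KP P)ᵀ * g.RPLin Z * g.KP P) := by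
  rw [SPLin_transpose _ hZ]
  simp only [SPLin, RPLin, AK_eq, CK_eq, transpose_add, transpose_mul,
    Matrix.add_mul, Matrix.mul_add, Finset.sum_add_distrib, Matrix.mul_sum, Matrix.sum_mul,
    Matrix.mul_assoc]
  abel

end GameData

/-- Taylor-type expansion of `G` at `P` in direction `Z`. -/
theorem statement2 {n m1 m2 r : ℕ} (g : GameData n m1 m2 r)
    (P Z : Matrix (Fin n) (Fin n) ℝ) (hP : P.IsSymm) (hZ : Z.IsSymm)
    (hRP : IsUnit (g.RP P).det) (hRPZ : IsUnit (g.RP (P + Z)).det) :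
    g.GP (P + Z) =
      g.GP P + Z * g.AK P + (g.AK P)ᵀ * Z
      + ∑ l, (g.CK P l)ᵀ * Z * g.CK P l
      - (g.NP P Z)ᵀ * (g.RP (P + Z))⁻¹ * g.NP P Z := by
  have hquad := Matrix.transpose_add_mul_nonsing_inv_add_mul_add (ΔS := g.SPLin Z)
    (g.RP_transpose hP) (g.RPLin_transpose hZ) hRP (g.RP_add P Z ▸ hRPZ) (g.RP_mul_KP hRP)
  rw [← g.RP_add, ← g.SP_add, ← g.NP_eq] at hquad
  have hlin := sub_eq_zero.mpr (g.closedLoop_lyapunov P hZ).symm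
  rw [g.GP_add, hquad, ← sub_eq_zero, ← hlin]
  abel
end
end

section
/- Let A, C_1, …, C_r ∈ ℝ^{n×n} and E_0, E_1, …, E_r ∈ ℝ^{q×n}, and suppose the system [E_0, …, E_r; A, C_1, …, C_r] is stochastically detectable. Then the following are equivalent: (a) the tuple (A, C_1, …, C_r) is mean-square stable; (b) there exists a real symmetric positive semidefinite n×n matrix P satisfying P A + A^T P + Σ_{l=1}^r C_l^T P C_l + Σ_{l=0}^r E_l^T E_l = 0. -/
/-!
Write `L P = P A + Aᵀ P + ∑ Cₗᵀ P Cₗ`. If `X > 0` and `L X < 0`, then `L P ≤ 0` forces `P ≥ 0`: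
otherwise `P - μ X` for the least generalized eigenvalue `μ < 0` is positive semidefinite with a
kernel vector `v`, and `vᵀ L(P - μ X) v = ∑ (Cₗ v)ᵀ (P - μ X) (Cₗ v) ≥ 0` contradicts
`L(P - μ X) < 0`. Hence `L` is injective, so bijective, on symmetric matrices, and the solution of
`L P = -∑ Eₗᵀ Eₗ` is positive semidefinite.

Conversely, if `L P = -∑ Eₗᵀ Eₗ` with `P ≥ 0` and `Y > 0` certifies the stability of the
detector-corrected system `(A + Θ E₀, Cₗ + Θ Eₗ)`, then `X = P + ε Y` works for small `ε > 0`: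
completing squares, `-L X` is `ε` times a small perturbation of `-L_Θ Y > 0` plus a positive
semidefinite remainder.
-/

open Matrix

noncomputable section

variable {ι κ m : Type*} [Fintype ι] [Fintype κ] [Fintype m]

/-- `MSStable F G` unfolds to `∃ X, X.PosDef ∧ (-lyapunovMap F G X).PosDef`. -/
def lyapunovMap (A : Matrix ι ι ℝ) (C : κ → Matrix ι ι ℝ) :
    Matrix ι ι ℝ →ₗ[ℝ] Matrix ι ι ℝ where
  toFun P := P * A + Aᵀ * P + ∑ l, (C l)ᵀ * P * C l
  map_add' P Q := by
    simp only [Matrix.add_mul, Matrix.mul_add, Finset.sum_add_distrib]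
    abel
  map_smul' c P := by simp [Finset.smul_sum]

@[simp]
lemma lyapunovMap_apply (A : Matrix ι ι ℝ) (C : κ → Matrix ι ι ℝ) (P : Matrix ι ι ℝ) :
    lyapunovMap A C P = P * A + Aᵀ * P + ∑ l, (C l)ᵀ * P * C l := rfl

lemma isHermitian_lyapunovMap (A : Matrix ι ι ℝ) (C : κ → Matrix ι ι ℝ) {P : Matrix ι ι ℝ}
    (hP : P.IsHermitian) : (lyapunovMap A C P).IsHermitian := by
  rw [IsHermitian, conjTranspose_eq_transpose_of_trivial] at hP ⊢
  simp only [lyapunovMap_apply, transpose_add, transpose_mul, transpose_sum, transpose_transpose,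
    hP, Matrix.mul_assoc]
  abel

lemma Matrix.posSemidef_transpose_mul_self (M : Matrix m ι ℝ) : (Mᵀ * M).PosSemidef := by
  simpa [conjTranspose_eq_transpose_of_trivial] using posSemidef_conjTranspose_mul_self M

lemma Matrix.PosSemidef.transpose_mul_mul_same {Y : Matrix ι ι ℝ} (hY : Y.PosSemidef)
    (M : Matrix ι m ℝ) : (Mᵀ * Y * M).PosSemidef := by
  simpa [conjTranspose_eq_transpose_of_trivial] using hY.conjTranspose_mul_mul_same M

lemma dotProduct_mulVec_smul_self (M : Matrix ι ι ℝ) (c : ℝ) (x : ι → ℝ) :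
    (c • x) ⬝ᵥ M *ᵥ (c • x) = c ^ 2 * (x ⬝ᵥ M *ᵥ x) := by
  simp only [mulVec_smul, dotProduct_smul, smul_dotProduct, smul_eq_mul]
  ring

/-- `μ` is the minimum of `xᵀ P x / xᵀ X x`, attained on the unit sphere by compactness. -/
theorem Matrix.PosDef.exists_posSemidef_sub_smul_mulVec_eq_zero [Nonempty ι]
    {X : Matrix ι ι ℝ} (hX : X.PosDef) {P : Matrix ι ι ℝ} (hP : P.IsHermitian) :
    ∃ μ : ℝ, (P - μ • X).PosSemidef ∧ ∃ v ≠ 0, (P - μ • X) *ᵥ v = 0 := by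
  set f : (ι → ℝ) → ℝ := fun x => (x ⬝ᵥ P *ᵥ x) / (x ⬝ᵥ X *ᵥ x)
  have hXpos : ∀ x : ι → ℝ, x ≠ 0 → 0 < x ⬝ᵥ X *ᵥ x := fun x hx => by
    simpa using hX.dotProduct_mulVec_pos hx
  have hne : ∀ x ∈ Metric.sphere (0 : ι → ℝ) 1, x ≠ 0 := fun x hx h => by
    simp [h] at hx
  obtain ⟨v, hv, hmin⟩ := (isCompact_sphere (0 : ι → ℝ) 1).exists_isMinOn
    (NormedSpace.sphere_nonempty.mpr zero_le_one)
    (f := f) (ContinuousOn.div (by fun_prop) (by fun_prop) fun x hx => (hXpos x (hne x hx)).ne')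
  have hle : ∀ x : ι → ℝ, f v * (x ⬝ᵥ X *ᵥ x) ≤ x ⬝ᵥ P *ᵥ x := by
    intro x
    rcases eq_or_ne x 0 with rfl | hx
    · simp
    have hnx : ‖x‖ ≠ 0 := norm_ne_zero_iff.mpr hx
    have hfx : f (‖x‖⁻¹ • x) = f x := by
      simp only [f, dotProduct_mulVec_smul_self]
      field_simp
    have := hmin (a := ‖x‖⁻¹ • x) (by simp [norm_smul, hnx])
    rw [Set.mem_ofPred_eq, hfx] at this
    exact (le_div_iff₀ (hXpos x hx)).mp this
  have hZ : (P - f v • X).PosSemidef := by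
    refine .of_dotProduct_mulVec_nonneg (hP.sub (hX.isHermitian.smul (.all _))) fun x => ?_
    simpa [sub_mulVec, smul_mulVec] using hle x
  refine ⟨f v, hZ, v, hne v hv, (hZ.dotProduct_mulVec_zero_iff v).mp ?_⟩
  simp only [star_trivial, sub_mulVec, smul_mulVec, dotProduct_sub, dotProduct_smul, smul_eq_mul,
    f]
  rw [div_mul_cancel₀ _ (hXpos v (hne v hv)).ne', sub_self]

theorem Matrix.PosDef.exists_posDef_sub_smul {M : Matrix ι ι ℝ} (hM : M.PosDef)
    {R : Matrix ι ι ℝ} (hR : R.IsHermitian) : ∃ ε : ℝ, 0 < ε ∧ (M - ε • R).PosDef := by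
  have hherm (ε : ℝ) : (M - ε • R).IsHermitian := hM.isHermitian.sub (hR.smul (.all _))
  cases isEmpty_or_nonempty ι
  · exact ⟨1, one_pos, .of_dotProduct_mulVec_pos (hherm 1) fun x hx =>
      (hx (Subsingleton.elim _ _)).elim⟩
  obtain ⟨μ, hμ, -⟩ := hM.exists_posSemidef_sub_smul_mulVec_eq_zero hR.neg
  set ε := (1 + |μ|)⁻¹
  have hε : 0 < ε := by positivity
  have hcoef : 0 < 1 + ε * μ := by
    have : ε * |μ| < 1 := by
      rw [inv_mul_lt_one₀ (by positivity)]
      linarith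
    nlinarith [neg_abs_le μ]
  have hsplit : M - ε • R = ε • (-R - μ • M) + (1 + ε * μ) • M := by
    module
  exact ⟨ε, hε, hsplit ▸ (hM.smul hcoef).posSemidef_add (hμ.smul hε.le)⟩

lemma dotProduct_lyapunovMap_mulVec_nonneg (A : Matrix ι ι ℝ) (C : κ → Matrix ι ι ℝ)
    {Z : Matrix ι ι ℝ} (hZ : Z.PosSemidef) {v : ι → ℝ} (hv : Z *ᵥ v = 0) :
    0 ≤ v ⬝ᵥ lyapunovMap A C Z *ᵥ v := by
  have hvZ : v ᵥ* Z = 0 := by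
    rw [← mulVec_transpose, ← conjTranspose_eq_transpose_of_trivial, hZ.isHermitian.eq, hv]
  have hC (l : κ) : 0 ≤ v ⬝ᵥ (C l)ᵀ *ᵥ Z *ᵥ C l *ᵥ v := by
    simpa [conjTranspose_eq_transpose_of_trivial, ← mulVec_mulVec] using
      (hZ.conjTranspose_mul_mul_same (C l)).dotProduct_mulVec_nonneg v
  simp only [lyapunovMap_apply, add_mulVec, dotProduct_add, sum_mulVec, dotProduct_sum,
    ← mulVec_mulVec, dotProduct_mulVec v Z, hvZ, hv, mulVec_zero, dotProduct_zero,
    zero_dotProduct, zero_add]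
  exact Finset.sum_nonneg fun l _ => hC l

section StableLyapunovMap

variable {A : Matrix ι ι ℝ} {C : κ → Matrix ι ι ℝ} {X : Matrix ι ι ℝ}
  (hX : X.PosDef) (hLX : (-lyapunovMap A C X).PosDef)
include hX hLX

theorem posSemidef_of_posSemidef_neg_lyapunovMap {P : Matrix ι ι ℝ} (hP : P.IsHermitian)
    (hLP : (-lyapunovMap A C P).PosSemidef) : P.PosSemidef := by
  by_contra hnot
  obtain ⟨x, hx⟩ : ∃ x : ι → ℝ, x ⬝ᵥ P *ᵥ x < 0 := by
    by_contra! h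
    exact hnot (.of_dotProduct_mulVec_nonneg hP (by simpa using h))
  have hx0 : x ≠ 0 := by rintro rfl; simp at hx
  obtain ⟨i, -⟩ := Function.ne_iff.mp hx0
  have : Nonempty ι := ⟨i⟩
  obtain ⟨μ, hZ, v, hv, hZv⟩ := hX.exists_posSemidef_sub_smul_mulVec_eq_zero hP
  have hμ : μ < 0 := by
    have h1 := hZ.dotProduct_mulVec_nonneg x
    have h2 : 0 < x ⬝ᵥ X *ᵥ x := by simpa using hX.dotProduct_mulVec_pos hx0
    simp only [star_trivial, sub_mulVec, smul_mulVec, dotProduct_sub, dotProduct_smul,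
      smul_eq_mul] at h1
    nlinarith
  have hPv := hLP.dotProduct_mulVec_nonneg v
  have hXv := hLX.dotProduct_mulVec_pos hv
  simp only [star_trivial, neg_mulVec, dotProduct_neg, neg_nonneg, neg_pos] at hPv hXv
  have hZv' := dotProduct_lyapunovMap_mulVec_nonneg A C hZ hZv
  simp only [map_sub, map_smul, sub_mulVec, smul_mulVec, dotProduct_sub, dotProduct_smul,
    smul_eq_mul] at hZv'
  nlinarith

theorem exists_isHermitian_lyapunovMap_eq {Q : Matrix ι ι ℝ} (hQ : Q.IsHermitian) :
    ∃ P : Matrix ι ι ℝ, P.IsHermitian ∧ lyapunovMap A C P = Q := by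
  let L := (lyapunovMap A C).restrict (p := selfAdjoint.submodule ℝ (Matrix ι ι ℝ))
    (q := selfAdjoint.submodule ℝ (Matrix ι ι ℝ)) fun P hP => isHermitian_lyapunovMap A C hP
  have hinj : Function.Injective L := by
    rw [← LinearMap.ker_eq_bot, LinearMap.ker_eq_bot']
    rintro ⟨P, hP⟩ hLP
    have hLP : lyapunovMap A C P = 0 := congrArg Subtype.val hLP
    have hnonneg := posSemidef_of_posSemidef_neg_lyapunovMap hX hLX hP
      (by rw [hLP, neg_zero]; exact .zero)
    have hnonpos := posSemidef_of_posSemidef_neg_lyapunovMap hX hLX hP.neg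
      (by rw [map_neg, hLP, neg_zero, neg_zero]; exact .zero)
    open scoped MatrixOrder in
    exact Subtype.ext (le_antisymm (by simpa [le_iff] using hnonpos) hnonneg.nonneg)
  obtain ⟨⟨P, hP⟩, hPQ⟩ := LinearMap.injective_iff_surjective.mp hinj ⟨Q, hQ⟩
  exact ⟨P, hP, congrArg Subtype.val hPQ⟩

end StableLyapunovMap

theorem exists_posSemidef_lyapunovMap_add_eq_zero {A : Matrix ι ι ℝ} {C : κ → Matrix ι ι ℝ}
    {X : Matrix ι ι ℝ} (hX : X.PosDef) (hLX : (-lyapunovMap A C X).PosDef)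
    {Q : Matrix ι ι ℝ} (hQ : Q.PosSemidef) :
    ∃ P : Matrix ι ι ℝ, P.PosSemidef ∧ lyapunovMap A C P + Q = 0 := by
  obtain ⟨P, hP, hLP⟩ := exists_isHermitian_lyapunovMap_eq hX hLX hQ.isHermitian.neg
  refine ⟨P, posSemidef_of_posSemidef_neg_lyapunovMap hX hLX hP ?_, by rw [hLP, neg_add_cancel]⟩
  rwa [hLP, neg_neg]

theorem exists_posDef_neg_lyapunovMap_of_detectable {A : Matrix ι ι ℝ} {C : κ → Matrix ι ι ℝ}
    {E0 : Matrix m ι ℝ} {E : κ → Matrix m ι ℝ} {Θ : Matrix ι m ℝ} {Y : Matrix ι ι ℝ}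
    (hY : Y.PosDef) (hLY : (-lyapunovMap (A + Θ * E0) (fun l => C l + Θ * E l) Y).PosDef)
    {P : Matrix ι ι ℝ} (hP : P.PosSemidef)
    (hLP : lyapunovMap A C P + (E0ᵀ * E0 + ∑ l, (E l)ᵀ * E l) = 0) :
    ∃ X : Matrix ι ι ℝ, X.PosDef ∧ (-lyapunovMap A C X).PosDef := by
  set G := Θᵀ * Y
  set R := Gᵀ * G + ∑ l, (G * C l)ᵀ * (G * C l)
  have hR : R.PosSemidef :=
    (posSemidef_transpose_mul_self G).add
      (posSemidef_sum _ fun l _ => posSemidef_transpose_mul_self _)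
  obtain ⟨ε, hε, hN⟩ := hLY.exists_posDef_sub_smul hR.isHermitian
  set S := (E0 + ε • G)ᵀ * (E0 + ε • G) + ∑ l, ((E l + ε • (G * C l))ᵀ * (E l + ε • (G * C l))
    + ε • ((Θ * E l)ᵀ * Y * (Θ * E l)))
  have hS : S.PosSemidef :=
    (posSemidef_transpose_mul_self _).add <| posSemidef_sum _ fun l _ =>
      (posSemidef_transpose_mul_self _).add ((hY.posSemidef.transpose_mul_mul_same _).smul hε.le)
  have hYt : Yᵀ = Y := by simpa [conjTranspose_eq_transpose_of_trivial] using hY.isHermitian.eq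
  have hsplit : -lyapunovMap A C (P + ε • Y) =
      ε • (-lyapunovMap (A + Θ * E0) (fun l => C l + Θ * E l) Y - ε • R) + S := by
    rw [map_add, map_smul, eq_neg_of_add_eq_zero_left hLP]
    simp only [G, R, S, lyapunovMap_apply, Matrix.add_mul, Matrix.mul_add, transpose_add,
      transpose_mul, transpose_smul, transpose_transpose, hYt, Matrix.mul_assoc, Matrix.smul_mul,
      Matrix.mul_smul, Finset.sum_add_distrib, ← Finset.smul_sum, smul_add, smul_smul]
    module
  exact ⟨P + ε • Y, (hY.smul hε).posSemidef_add hP, hsplit ▸ (hN.smul hε).add_posSemidef hS⟩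

/-- under stochastic detectability of `[E_0, …, E_r; A, C_1, …, C_r]`,
mean-square stability of `(A, C_1, …, C_r)` is equivalent to the solvability of the
Lyapunov-type equation by a positive semidefinite matrix. -/
theorem statement7 {n q r : ℕ}
    (A : Matrix (Fin n) (Fin n) ℝ) (C : Fin r → Matrix (Fin n) (Fin n) ℝ)
    (E0 : Matrix (Fin q) (Fin n) ℝ) (E : Fin r → Matrix (Fin q) (Fin n) ℝ)
    (hdet : StochDetectable E0 E A C) :
    MSStable A C ↔
      ∃ P : Matrix (Fin n) (Fin n) ℝ, P.PosSemidef ∧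
        P * A + Aᵀ * P + ∑ l, (C l)ᵀ * P * C l + (E0ᵀ * E0 + ∑ l, (E l)ᵀ * E l) = 0 := by
  constructor
  · rintro ⟨X, hX, hLX⟩
    exact exists_posSemidef_lyapunovMap_add_eq_zero hX hLX <|
      (posSemidef_transpose_mul_self E0).add
        (posSemidef_sum _ fun l _ => posSemidef_transpose_mul_self (E l))
  · rintro ⟨P, hP, hLP⟩
    obtain ⟨Θ, Y, hY, hLY⟩ := hdet
    exact exists_posDef_neg_lyapunovMap_of_detectable hY hLY hP hLP
end
end

section
/- Assume 0 ∈ Dom G. Let L ∈ 𝒜 with associated stabilizing solution P̃_L, and let P, Z be real symmetric n×n matrices such that P ∈ Dom G, P + Z ∈ Dom G, and Z satisfies the inner Riccati equation at P. If P̃_L ⪰ P + Z, then the tuple (A + B_1 K_1(P+Z) + B_2 K_2(0) + B_2 L, C_1 + D_{1,1} K_1(P+Z) + D_{1,2} K_2(0) + D_{1,2} L, …, C_r + D_{r,1} K_1(P+Z) + D_{r,2} K_2(0) + D_{r,2} L) is mean-square stable. -/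
open Matrix BigOperators

noncomputable section

/-!
Write `Γ(X, F)` (`LQSystem.closedLoopG`) for the Riccati expression with the optimal gain replaced
by a feedback `F`: it is affine in `X`, with linear part the Lyapunov operator of the closed loop
of `F`, and quadratic in `F` with Hessian `R(X)` and critical point `K(X)`, where
`Γ(X, K(X)) = G(X)`.

Put `W = P + Z`. The inner Riccati equation says `Γ(W, K(P)) = N₂ᵀ R₂₂(W)⁻¹ N₂`, and
`N(P, Z) = R(W) (K(P) - K(W))`; since `R₁₁(W) ≺ 0 ≺ R₂₂(W)` this forces `G(W) ⪰ 0`, hence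
`Γ(W, F) ⪰ 0` for `F = (K₁(W), K₂(0) + L)`. At `P̃` the Riccati equation of `L` gives
`Γ(P̃, F) = Eᵀ R₁₁(P̃) E` with `E = K₁(W) - K₁(0) - K_L(P̃)`. Subtracting, `Δ = P̃ - W ⪰ 0`
satisfies `-𝓛(Δ) ⪰ Eᵀ (-R₁₁(P̃)) E` for the Lyapunov operator `𝓛` of the closed loop of `F`, which
is the stable closed loop of `K_L(P̃)` perturbed by `B₁ E`, `D_{l,1} E`. If `Y` certifies the
unperturbed loop, `Δ + δ Y` certifies the perturbed one for small `δ > 0`.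
-/

namespace Matrix

variable {σ ι κ : Type*} [Fintype σ] [Fintype ι] [Fintype κ]

open scoped MatrixOrder in
theorem PosDef.exists_pos_sub_smul_posDef [DecidableEq σ] {P H : Matrix σ σ ℝ} (hP : P.PosDef)
    (hH : H.IsHermitian) : ∃ ε : ℝ, 0 < ε ∧ (P - ε • H).PosDef := by
  rcases subsingleton_or_nontrivial (Matrix σ σ ℝ) with _ | _
  · exact ⟨1, one_pos, by rwa [Subsingleton.elim (P - (1 : ℝ) • H) P]⟩
  obtain ⟨r, hr, hrP⟩ : ∃ r > 0, algebraMap ℝ _ r ≤ P :=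
    (CFC.exists_pos_algebraMap_le_iff hP.isHermitian.isSelfAdjoint).2 fun x hx =>
      (isStrictlyPositive_iff_posDef.2 hP).spectrum_pos hx
  obtain ⟨s, hs⟩ : BddAbove (spectrum ℝ H) := by
    rw [hH.spectrum_real_eq_range_eigenvalues]; exact (Set.finite_range _).bddAbove
  have hHs : H ≤ algebraMap ℝ _ s := le_algebraMap_of_spectrum_le hs hH.isSelfAdjoint
  rw [Algebra.algebraMap_eq_smul_one] at hrP hHs
  obtain ⟨ε, hε, hεs⟩ : ∃ ε : ℝ, 0 < ε ∧ ε * s < r :=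
    ⟨r / (|s| + 1), by positivity, by
      rw [div_mul_eq_mul_div, div_lt_iff₀ (by positivity)]; nlinarith [le_abs_self s]⟩
  refine ⟨ε, hε, ?_⟩
  have key : P - ε • H = (P - r • 1) + ε • (s • 1 - H) + (r - ε * s) • (1 : Matrix σ σ ℝ) := by
    module
  rw [key]
  exact PosDef.posSemidef_add (hrP.add (hHs.smul hε.le)) (PosDef.one.smul (sub_pos.2 hεs))

theorem PosSemidef.transpose_mul_mul_same_s11 {A : Matrix σ σ ℝ} (hA : A.PosSemidef)
    (B : Matrix σ ι ℝ) : (Bᵀ * A * B).PosSemidef := by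
  simpa using hA.conjTranspose_mul_mul_same B

theorem posSemidef_smul_add_smul_sub {ε : ℝ} (hε : 0 < ε) (M : Matrix σ ι ℝ) (W : Matrix ι σ ℝ) :
    (ε • (M * Mᵀ) + ε⁻¹ • (Wᵀ * W) - (M * W + (M * W)ᵀ)).PosSemidef := by
  have h := (posSemidef_conjTranspose_mul_self (ε • Mᵀ - W)).smul (inv_nonneg.2 hε.le)
  rw [conjTranspose_eq_transpose_of_trivial] at h
  convert h using 1
  simp only [transpose_sub, transpose_smul, transpose_transpose, transpose_mul, Matrix.sub_mul,
    Matrix.mul_sub, Matrix.smul_mul, Matrix.mul_smul, smul_sub, smul_smul]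
  match_scalars <;> field_simp

theorem fromRows_transpose_mul_fromBlocks_mul_fromRows {τ : Type*} (E₁ : Matrix ι τ ℝ)
    (E₂ : Matrix κ τ ℝ) (R₁₁ : Matrix ι ι ℝ) (R₁₂ : Matrix ι κ ℝ) (R₂₁ : Matrix κ ι ℝ)
    (R₂₂ : Matrix κ κ ℝ) :
    (fromRows E₁ E₂)ᵀ * fromBlocks R₁₁ R₁₂ R₂₁ R₂₂ * fromRows E₁ E₂
      = E₁ᵀ * R₁₁ * E₁ + E₁ᵀ * R₁₂ * E₂ + E₂ᵀ * R₂₁ * E₁ + E₂ᵀ * R₂₂ * E₂ := by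
  simp only [transpose_fromRows, fromCols_mul_fromBlocks, fromCols_mul_fromRows, Matrix.add_mul,
    Matrix.mul_assoc]
  abel

def lyapunovOp (F : Matrix σ σ ℝ) (G : κ → Matrix σ σ ℝ) : Matrix σ σ ℝ →ₗ[ℝ] Matrix σ σ ℝ where
  toFun X := X * F + Fᵀ * X + ∑ l, (G l)ᵀ * X * G l
  map_add' X Y := by
    simp only [Matrix.add_mul, Matrix.mul_add, Finset.sum_add_distrib]; abel
  map_smul' c X := by
    simp only [Matrix.smul_mul, Matrix.mul_smul, Finset.smul_sum, smul_add, RingHom.id_apply]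

@[simp]
theorem lyapunovOp_apply (F : Matrix σ σ ℝ) (G : κ → Matrix σ σ ℝ) (X : Matrix σ σ ℝ) :
    lyapunovOp F G X = X * F + Fᵀ * X + ∑ l, (G l)ᵀ * X * G l := rfl

theorem lyapunovOp_add_mul (F : Matrix σ σ ℝ) (G : κ → Matrix σ σ ℝ) (B : Matrix σ ι ℝ)
    (D : κ → Matrix σ ι ℝ) (W : Matrix ι σ ℝ) {Y : Matrix σ σ ℝ} (hY : Yᵀ = Y) :
    lyapunovOp (F + B * W) (fun l => G l + D l * W) Y
      = lyapunovOp F G Y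
        + ((Y * B + ∑ l, (G l)ᵀ * Y * D l) * W + ((Y * B + ∑ l, (G l)ᵀ * Y * D l) * W)ᵀ)
        + Wᵀ * (∑ l, (D l)ᵀ * Y * D l) * W := by
  simp only [lyapunovOp_apply, transpose_add, transpose_mul, transpose_sum, transpose_transpose,
    Matrix.add_mul, Matrix.mul_add, Matrix.sum_mul, Matrix.mul_sum, Finset.sum_add_distrib,
    Matrix.mul_assoc, hY]
  abel

variable [DecidableEq κ]

theorem posSemidef_saddle_fromBlocks {R₁₁ : Matrix ι ι ℝ} {R₂₂ : Matrix κ κ ℝ}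
    (h₁₁ : (-R₁₁).PosDef) (h₂₂ : R₂₂.PosDef) (R₁₂ : Matrix ι κ ℝ) (E₁ : Matrix ι σ ℝ)
    (E₂ : Matrix κ σ ℝ) :
    ((R₁₂ᵀ * E₁ + R₂₂ * E₂)ᵀ * R₂₂⁻¹ * (R₁₂ᵀ * E₁ + R₂₂ * E₂)
      - (fromRows E₁ E₂)ᵀ * fromBlocks R₁₁ R₁₂ R₁₂ᵀ R₂₂ * fromRows E₁ E₂).PosSemidef := by
  have hdet : IsUnit R₂₂.det := (isUnit_iff_isUnit_det _).1 h₂₂.isUnit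
  have hsymm : R₂₂ᵀ = R₂₂ := h₂₂.isHermitian
  have key : (R₁₂ᵀ * E₁ + R₂₂ * E₂)ᵀ * R₂₂⁻¹ * (R₁₂ᵀ * E₁ + R₂₂ * E₂)
      - (fromRows E₁ E₂)ᵀ * fromBlocks R₁₁ R₁₂ R₁₂ᵀ R₂₂ * fromRows E₁ E₂
      = E₁ᵀ * (-R₁₁ + R₁₂ * R₂₂⁻¹ * R₁₂ᵀ) * E₁ := by
    rw [fromRows_transpose_mul_fromBlocks_mul_fromRows]
    simp only [transpose_add, transpose_mul, transpose_transpose, hsymm, Matrix.add_mul,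
      Matrix.mul_add, Matrix.neg_mul, Matrix.mul_neg, Matrix.mul_assoc,
      nonsing_inv_mul_cancel_left _ _ hdet, mul_nonsing_inv_cancel_left _ _ hdet]
    abel
  rw [key]
  exact PosSemidef.transpose_mul_mul_same_s11
    (h₁₁.posSemidef.add (h₂₂.inv.posSemidef.mul_mul_conjTranspose_same R₁₂)) E₁

variable [DecidableEq ι]

theorem isUnit_det_of_posDef_neg {M : Matrix ι ι ℝ} (h : (-M).PosDef) : IsUnit M.det :=
  (isUnit_iff_isUnit_det M).1 (by simpa using h.isUnit.neg)

theorem isUnit_det_fromBlocks_of_posDef {R₁₁ : Matrix ι ι ℝ} {R₂₂ : Matrix κ κ ℝ}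
    (h₁₁ : (-R₁₁).PosDef) (h₂₂ : R₂₂.PosDef) (R₁₂ : Matrix ι κ ℝ) :
    IsUnit (fromBlocks R₁₁ R₁₂ R₁₂ᵀ R₂₂).det := by
  have := h₂₂.isUnit.invertible
  have hschur : (-(R₁₁ - R₁₂ * ⅟R₂₂ * R₁₂ᵀ)).PosDef := by
    rw [neg_sub, sub_eq_neg_add, invOf_eq_nonsing_inv]
    exact h₁₁.add_posSemidef (h₂₂.inv.posSemidef.mul_mul_conjTranspose_same R₁₂)
  rw [det_fromBlocks₂₂]
  exact ((isUnit_iff_isUnit_det _).1 h₂₂.isUnit).mul (isUnit_det_of_posDef_neg hschur)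

end Matrix

theorem MSStable.of_lyapunovOp_add_mul {n m r : ℕ} {F : Matrix (Fin n) (Fin n) ℝ}
    {G : Fin r → Matrix (Fin n) (Fin n) ℝ} (hs : MSStable F G) (B : Matrix (Fin n) (Fin m) ℝ)
    (D : Fin r → Matrix (Fin n) (Fin m) ℝ) (W : Matrix (Fin m) (Fin n) ℝ)
    {N : Matrix (Fin m) (Fin m) ℝ} {Δ : Matrix (Fin n) (Fin n) ℝ} (hN : N.PosDef)
    (hΔ : Δ.PosSemidef)
    (h : (-lyapunovOp (F + B * W) (fun l => G l + D l * W) Δ - Wᵀ * N * W).PosSemidef) :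
    MSStable (F + B * W) (fun l => G l + D l * W) := by
  obtain ⟨Y, hY, hYF⟩ := hs
  have hYt : Yᵀ = Y := hY.isHermitian
  set M := Y * B + ∑ l, (G l)ᵀ * Y * D l with hM
  set J := ∑ l, (D l)ᵀ * Y * D l with hJ
  obtain ⟨ε, hε, hεM⟩ := PosDef.exists_pos_sub_smul_posDef hYF
    (posSemidef_self_mul_conjTranspose M).isHermitian
  have hJpsd : J.PosSemidef :=
    posSemidef_sum Finset.univ fun l _ => hY.posSemidef.transpose_mul_mul_same_s11 (D l)
  obtain ⟨δ, hδ, hδN⟩ := hN.exists_pos_sub_smul_posDef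
    ((PosSemidef.one.smul (inv_nonneg.2 hε.le)).add hJpsd).isHermitian
  -- The cross terms of `Y` with the feedback `W` are split by Young's inequality; the resulting
  -- `Wᵀ W` and `Wᵀ J W` terms are absorbed by `Wᵀ N W` once `δ` is small.
  refine ⟨Δ + δ • Y, PosDef.posSemidef_add hΔ (hY.smul hδ), ?_⟩
  show (-lyapunovOp _ _ (Δ + δ • Y)).PosDef
  have key : -lyapunovOp (F + B * W) (fun l => G l + D l * W) (Δ + δ • Y)
      = (-lyapunovOp (F + B * W) (fun l => G l + D l * W) Δ - Wᵀ * N * W)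
        + Wᵀ * (N - δ • (ε⁻¹ • 1 + J)) * W
        + δ • (-lyapunovOp F G Y - ε • (M * Mᵀ))
        + δ • (ε • (M * Mᵀ) + ε⁻¹ • (Wᵀ * W) - (M * W + (M * W)ᵀ)) := by
    rw [map_add, map_smul, lyapunovOp_add_mul F G B D W hYt, ← hM, ← hJ]
    simp only [Matrix.mul_sub, Matrix.sub_mul, Matrix.mul_add, Matrix.add_mul, Matrix.smul_mul,
      Matrix.mul_smul, Matrix.mul_one]
    module
  rw [key]
  exact (PosDef.posSemidef_add (h.add (hδN.posSemidef.transpose_mul_mul_same_s11 W))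
    (hεM.smul hδ)).add_posSemidef ((posSemidef_smul_add_smul_sub hε M W).smul hδ.le)

/-- The stochastic system `dx = (A x + B u) dt + ∑ l, (C l x + D l u) dw_l` with cost weight
`[[Q, Sᵀ], [S, R]]`; `SP`, `RP`, `KP`, `GP` below are `S(P)`, `R(P)`, `K(P)`, `G(P)` for it. -/
structure LQSystem (σ ι κ : Type*) where
  A : Matrix σ σ ℝ
  B : Matrix σ ι ℝ
  C : κ → Matrix σ σ ℝ
  D : κ → Matrix σ ι ℝ
  Q : Matrix σ σ ℝ
  S : Matrix ι σ ℝ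
  R : Matrix ι ι ℝ

namespace LQSystem

variable {σ ι κ : Type*} [Fintype σ] [Fintype κ] (sys : LQSystem σ ι κ)

def SP (X : Matrix σ σ ℝ) : Matrix ι σ ℝ :=
  sys.Bᵀ * X + ∑ l, (sys.D l)ᵀ * X * sys.C l + sys.S

def RP (X : Matrix σ σ ℝ) : Matrix ι ι ℝ :=
  sys.R + ∑ l, (sys.D l)ᵀ * X * sys.D l

variable {sys} in
theorem RP_transpose (hR : sys.Rᵀ = sys.R) {X : Matrix σ σ ℝ} (hX : Xᵀ = X) :
    (sys.RP X)ᵀ = sys.RP X := by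
  simp [RP, transpose_sum, Matrix.mul_assoc, hR, hX]

variable [Fintype ι]

def KP [DecidableEq ι] (X : Matrix σ σ ℝ) : Matrix ι σ ℝ :=
  -((sys.RP X)⁻¹ * sys.SP X)

def GP [DecidableEq ι] (X : Matrix σ σ ℝ) : Matrix σ σ ℝ :=
  X * sys.A + sys.Aᵀ * X + ∑ l, (sys.C l)ᵀ * X * sys.C l + sys.Q
    - (sys.SP X)ᵀ * (sys.RP X)⁻¹ * sys.SP X

def weight (F : Matrix ι σ ℝ) : Matrix σ σ ℝ :=
  sys.Q + Fᵀ * sys.S + sys.Sᵀ * F + Fᵀ * sys.R * F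

def closedLoopG (X : Matrix σ σ ℝ) (F : Matrix ι σ ℝ) : Matrix σ σ ℝ :=
  lyapunovOp (sys.A + sys.B * F) (fun l => sys.C l + sys.D l * F) X + sys.weight F

theorem closedLoopG_add_left (X Z : Matrix σ σ ℝ) (F : Matrix ι σ ℝ) :
    sys.closedLoopG (X + Z) F
      = sys.closedLoopG X F
        + lyapunovOp (sys.A + sys.B * F) (fun l => sys.C l + sys.D l * F) Z := by
  simp only [closedLoopG, map_add]
  abel

theorem closedLoopG_zero_left (F : Matrix ι σ ℝ) : sys.closedLoopG 0 F = sys.weight F := by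
  simp [closedLoopG]

theorem SP_add_RP_mul (X Z : Matrix σ σ ℝ) (F : Matrix ι σ ℝ) :
    sys.SP (X + Z) + sys.RP (X + Z) * F
      = sys.SP X + sys.RP X * F
        + (sys.Bᵀ * Z + ∑ l, (sys.D l)ᵀ * Z * (sys.C l + sys.D l * F)) := by
  simp only [SP, RP, Matrix.add_mul, Matrix.mul_add, Matrix.sum_mul, Finset.sum_add_distrib,
    Matrix.mul_assoc]
  abel

variable {sys}

theorem closedLoopG_eq {X : Matrix σ σ ℝ} (hX : Xᵀ = X) (F : Matrix ι σ ℝ) :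
    sys.closedLoopG X F
      = X * sys.A + sys.Aᵀ * X + ∑ l, (sys.C l)ᵀ * X * sys.C l + sys.Q
        + Fᵀ * sys.SP X + (sys.SP X)ᵀ * F + Fᵀ * sys.RP X * F := by
  simp only [closedLoopG, weight, SP, RP, lyapunovOp_apply, transpose_add, transpose_mul,
    transpose_sum, transpose_transpose, Matrix.add_mul, Matrix.mul_add, Matrix.sum_mul,
    Matrix.mul_sum, Finset.sum_add_distrib, Matrix.mul_assoc, hX]
  abel

theorem closedLoopG_add_right (hR : sys.Rᵀ = sys.R) {X : Matrix σ σ ℝ} (hX : Xᵀ = X)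
    (F E : Matrix ι σ ℝ) :
    sys.closedLoopG X (F + E)
      = sys.closedLoopG X F + Eᵀ * (sys.SP X + sys.RP X * F)
        + (sys.SP X + sys.RP X * F)ᵀ * E + Eᵀ * sys.RP X * E := by
  simp only [closedLoopG_eq hX, transpose_add, transpose_mul, RP_transpose hR hX, Matrix.add_mul,
    Matrix.mul_add, Matrix.mul_assoc]
  abel

variable [DecidableEq ι]

theorem RP_mul_KP {X : Matrix σ σ ℝ} (h : IsUnit (sys.RP X).det) :
    sys.RP X * sys.KP X = -sys.SP X := by
  rw [KP, Matrix.mul_neg, ← Matrix.mul_assoc, mul_nonsing_inv _ h, Matrix.one_mul]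

theorem closedLoopG_KP {X : Matrix σ σ ℝ} (hX : Xᵀ = X) (h : IsUnit (sys.RP X).det) :
    sys.closedLoopG X (sys.KP X) = sys.GP X := by
  have hquad : (sys.KP X)ᵀ * sys.RP X * sys.KP X = -((sys.KP X)ᵀ * sys.SP X) := by
    rw [Matrix.mul_assoc, RP_mul_KP h, Matrix.mul_neg]
  have hlin : (sys.SP X)ᵀ * sys.KP X = -((sys.SP X)ᵀ * (sys.RP X)⁻¹ * sys.SP X) := by
    rw [KP, Matrix.mul_neg, Matrix.mul_assoc]
  rw [closedLoopG_eq hX, hquad, hlin, GP]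
  abel

theorem closedLoopG_KP_add (hR : sys.Rᵀ = sys.R) {X : Matrix σ σ ℝ} (hX : Xᵀ = X)
    (h : IsUnit (sys.RP X).det) (E : Matrix ι σ ℝ) :
    sys.closedLoopG X (sys.KP X + E) = sys.GP X + Eᵀ * sys.RP X * E := by
  rw [closedLoopG_add_right hR hX, RP_mul_KP h, add_neg_cancel, closedLoopG_KP hX h]
  simp

end LQSystem

namespace GameData

variable {n m1 m2 r : ℕ} (g : GameData n m1 m2 r)

def lq : LQSystem (Fin n) (Fin m1 ⊕ Fin m2) (Fin r) where
  A := g.A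
  B := fromCols g.B1 g.B2
  C := g.C
  D l := fromCols (g.D1 l) (g.D2 l)
  Q := g.Q
  S := g.Sw
  R := g.Rw

/-- Player 1's problem when player 2 plays `u₂ = (K₂(0) + L) x`, in the shifted input
`u₁ = (K₁(0) + F₁) x` (see `closedLoopG_lq_eq_lqL`). -/
def lqL (L : Matrix (Fin m2) (Fin n) ℝ) : LQSystem (Fin n) (Fin m1) (Fin r) where
  A := g.AL L
  B := g.B1
  C := g.CL L
  D := g.D1
  Q := g.QL L
  S := g.SL L
  R := g.R11

theorem lq_R_transpose : g.lq.Rᵀ = g.lq.R := by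
  simp [lq, Rw, fromBlocks_transpose, g.hR11.eq, g.hR22.eq]

theorem lq_B_mul_fromRows (F₁ : Matrix (Fin m1) (Fin n) ℝ) (F₂ : Matrix (Fin m2) (Fin n) ℝ) :
    g.lq.B * fromRows F₁ F₂ = g.B1 * F₁ + g.B2 * F₂ :=
  fromCols_mul_fromRows _ _ _ _

theorem lq_D_mul_fromRows (l : Fin r) (F₁ : Matrix (Fin m1) (Fin n) ℝ)
    (F₂ : Matrix (Fin m2) (Fin n) ℝ) :
    g.lq.D l * fromRows F₁ F₂ = g.D1 l * F₁ + g.D2 l * F₂ :=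
  fromCols_mul_fromRows _ _ _ _

theorem lq_SP (X : Matrix (Fin n) (Fin n) ℝ) : g.lq.SP X = g.SP X := by
  ext (i | i) j <;> simp [LQSystem.SP, SP, S1P, S2P, lq, Sw, transpose_fromCols, Matrix.sum_apply]

theorem lq_RP (X : Matrix (Fin n) (Fin n) ℝ) : g.lq.RP X = g.RP X := by
  ext (i | i) (j | j) <;>
    simp [LQSystem.RP, RP, R11P, R12P, R21P, R22P, lq, Rw, transpose_fromCols, Matrix.sum_apply]

theorem lq_KP (X : Matrix (Fin n) (Fin n) ℝ) : g.lq.KP X = g.KP X := by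
  rw [LQSystem.KP, lq_SP, lq_RP, KP]

theorem lq_GP (X : Matrix (Fin n) (Fin n) ℝ) : g.lq.GP X = g.GP X := by
  rw [LQSystem.GP, lq_SP, lq_RP, GP]
  rfl

theorem fromRows_K1_K2 (X : Matrix (Fin n) (Fin n) ℝ) : fromRows (g.K1 X) (g.K2 X) = g.KP X := by
  ext (i | i) j <;> rfl

theorem R21P_eq_transpose {X : Matrix (Fin n) (Fin n) ℝ} (hX : X.IsSymm) :
    g.R21P X = (g.R12P X)ᵀ := by
  simp [R21P, R12P, transpose_sum, Matrix.mul_assoc, hX.eq]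

theorem RP_eq_fromBlocks {X : Matrix (Fin n) (Fin n) ℝ} (hX : X.IsSymm) :
    g.RP X = fromBlocks (g.R11P X) (g.R12P X) (g.R12P X)ᵀ (g.R22P X) := by
  rw [RP, g.R21P_eq_transpose hX]

theorem isUnit_det_RP {X : Matrix (Fin n) (Fin n) ℝ} (hX : X.IsSymm) (hdom : g.MemDomG X) :
    IsUnit (g.RP X).det := by
  rw [g.RP_eq_fromBlocks hX]
  exact isUnit_det_fromBlocks_of_posDef hdom.2 hdom.1 _

theorem lq_closedLoop_KP (P : Matrix (Fin n) (Fin n) ℝ) :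
    (g.lq.A + g.lq.B * g.lq.KP P = g.AK P) ∧
      ∀ l, g.lq.C l + g.lq.D l * g.lq.KP P = g.CK P l := by
  simp only [lq_KP, ← fromRows_K1_K2, lq_B_mul_fromRows, lq_D_mul_fromRows, AK, CK, add_assoc]
  exact ⟨rfl, fun _ => rfl⟩

theorem lq_NP (P Z : Matrix (Fin n) (Fin n) ℝ) :
    g.lq.Bᵀ * Z + ∑ l, (g.lq.D l)ᵀ * Z * (g.lq.C l + g.lq.D l * g.lq.KP P) = g.NP P Z := by
  simp only [(g.lq_closedLoop_KP P).2]
  ext (i | i) j <;> simp [NP, N1, N2, lq, transpose_fromCols, Matrix.sum_apply]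

theorem GP_add_posSemidef {P Z : Matrix (Fin n) (Fin n) ℝ} (hP : P.IsSymm) (hZ : Z.IsSymm)
    (hdomP : g.MemDomG P) (hdomPZ : g.MemDomG (P + Z)) (hinner : g.InnerRiccati P Z) :
    (g.GP (P + Z)).PosSemidef := by
  have hW : (P + Z).IsSymm := hP.add hZ
  have hRP : IsUnit (g.lq.RP P).det := g.lq_RP P ▸ g.isUnit_det_RP hP hdomP
  have hRW : IsUnit (g.lq.RP (P + Z)).det := g.lq_RP _ ▸ g.isUnit_det_RP hW hdomPZ
  set E := g.lq.KP P - g.lq.KP (P + Z) with hE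
  have hN : g.NP P Z = g.lq.RP (P + Z) * E := by
    have h := g.lq.SP_add_RP_mul P Z (g.lq.KP P)
    rw [LQSystem.RP_mul_KP hRP, add_neg_cancel, zero_add, lq_NP] at h
    rw [← h, Matrix.mul_sub, LQSystem.RP_mul_KP hRW, sub_neg_eq_add, add_comm]
  have hG : g.lq.closedLoopG (P + Z) (g.lq.KP P) = (g.N2 P Z)ᵀ * (g.R22P (P + Z))⁻¹ * g.N2 P Z := by
    rw [LQSystem.closedLoopG_add_left, LQSystem.closedLoopG_KP hP.eq hRP, lq_GP,
      (g.lq_closedLoop_KP P).1, funext (g.lq_closedLoop_KP P).2, ← sub_eq_zero.1 hinner,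
      lyapunovOp_apply]
    abel
  have hG' : g.lq.closedLoopG (P + Z) (g.lq.KP P)
      = g.GP (P + Z) + Eᵀ * g.lq.RP (P + Z) * E := by
    rw [← lq_GP, ← LQSystem.closedLoopG_KP_add g.lq_R_transpose hW.eq hRW, hE, add_sub_cancel]
  have hEblocks : E = fromRows (g.K1 P - g.K1 (P + Z)) (g.K2 P - g.K2 (P + Z)) := by
    ext (i | i) j <;> simp [hE, lq_KP, K1, K2]
  have hN2 : g.N2 P Z = (g.R12P (P + Z))ᵀ * (g.K1 P - g.K1 (P + Z))
      + g.R22P (P + Z) * (g.K2 P - g.K2 (P + Z)) := by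
    have h := congrArg toRows₂ hN
    rwa [hEblocks, lq_RP, g.RP_eq_fromBlocks hW, fromBlocks_mul_fromRows, NP,
      toRows₂_fromRows, toRows₂_fromRows] at h
  have hGP : g.GP (P + Z) = (g.N2 P Z)ᵀ * (g.R22P (P + Z))⁻¹ * g.N2 P Z
      - Eᵀ * g.lq.RP (P + Z) * E := by
    rw [← hG, hG', add_sub_cancel_right]
  rw [hGP, hN2, hEblocks, lq_RP, g.RP_eq_fromBlocks hW]
  exact posSemidef_saddle_fromBlocks hdomPZ.2 hdomPZ.1 _ _ _

theorem closedLoopG_K1_posSemidef {P Z : Matrix (Fin n) (Fin n) ℝ} (hP : P.IsSymm)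
    (hZ : Z.IsSymm) (hdomP : g.MemDomG P) (hdomPZ : g.MemDomG (P + Z))
    (hinner : g.InnerRiccati P Z) (F₂ : Matrix (Fin m2) (Fin n) ℝ) :
    (g.lq.closedLoopG (P + Z) (fromRows (g.K1 (P + Z)) F₂)).PosSemidef := by
  have hW : (P + Z).IsSymm := hP.add hZ
  have hF : fromRows (g.K1 (P + Z)) F₂ = g.lq.KP (P + Z) + fromRows 0 (F₂ - g.K2 (P + Z)) := by
    ext (i | i) j <;> simp [lq_KP, K1, K2]
  rw [hF, LQSystem.closedLoopG_KP_add g.lq_R_transpose hW.eq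
      (g.lq_RP _ ▸ g.isUnit_det_RP hW hdomPZ), lq_GP, lq_RP, g.RP_eq_fromBlocks hW,
    fromRows_transpose_mul_fromBlocks_mul_fromRows]
  simpa using (g.GP_add_posSemidef hP hZ hdomP hdomPZ hinner).add
    (hdomPZ.1.posSemidef.transpose_mul_mul_same_s11 (F₂ - g.K2 (P + Z)))

theorem closedLoopG_lq_eq_lqL (hdom0 : g.MemDomG 0) (L : Matrix (Fin m2) (Fin n) ℝ)
    (X : Matrix (Fin n) (Fin n) ℝ) (F₁ : Matrix (Fin m1) (Fin n) ℝ) :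
    g.lq.closedLoopG X (fromRows (g.K1 0 + F₁) (g.K2 0 + L)) = (g.lqL L).closedLoopG X F₁ := by
  have hA : g.lq.A + g.lq.B * fromRows (g.K1 0 + F₁) (g.K2 0 + L) = g.AL L + g.B1 * F₁ := by
    rw [lq_B_mul_fromRows]; simp only [lq, AL, Matrix.mul_add]; abel
  have hC : ∀ l, g.lq.C l + g.lq.D l * fromRows (g.K1 0 + F₁) (g.K2 0 + L)
      = g.CL L l + g.D1 l * F₁ := fun l => by
    rw [lq_D_mul_fromRows]; simp only [lq, CL, Matrix.mul_add]; abel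
  have hweight : g.lq.weight (fromRows (g.K1 0 + F₁) (g.K2 0 + L)) = (g.lqL L).weight F₁ := by
    have hF : fromRows (g.K1 0 + F₁) (g.K2 0 + L) = g.lq.KP 0 + fromRows F₁ L := by
      ext (i | i) j <;> simp [lq_KP, K1, K2]
    rw [← LQSystem.closedLoopG_zero_left, hF, LQSystem.closedLoopG_KP_add g.lq_R_transpose
        (transpose_zero) (g.lq_RP 0 ▸ g.isUnit_det_RP isSymm_zero hdom0), lq_GP, lq_RP,
      g.RP_eq_fromBlocks isSymm_zero, fromRows_transpose_mul_fromBlocks_mul_fromRows]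
    simp only [GP, LQSystem.weight, lqL, QL, SL, R11P, R12P, R22P, Matrix.mul_zero,
      Matrix.zero_mul, Finset.sum_const_zero, zero_add, add_zero, transpose_mul, Matrix.mul_assoc]
    abel
  simp only [LQSystem.closedLoopG, hA, hC, hweight]
  rfl

theorem closedLoopG_lq_of_AREL_eq_zero (hdom0 : g.MemDomG 0) {L : Matrix (Fin m2) (Fin n) ℝ}
    {P : Matrix (Fin n) (Fin n) ℝ} (hP : P.IsSymm) (hARE : g.AREL L P = 0)
    (hR11 : (-g.R11P P).PosDef) (F₁ : Matrix (Fin m1) (Fin n) ℝ) :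
    g.lq.closedLoopG P (fromRows F₁ (g.K2 0 + L))
      = (F₁ - g.K1 0 - g.KL L P)ᵀ * g.R11P P * (F₁ - g.K1 0 - g.KL L P) := by
  have hF : F₁ = g.K1 0 + (g.KL L P + (F₁ - g.K1 0 - g.KL L P)) := by abel
  have hL := (g.lqL L).closedLoopG_KP_add g.hR11.eq hP.eq (isUnit_det_of_posDef_neg hR11)
    (F₁ - g.K1 0 - g.KL L P)
  rw [show (g.lqL L).GP P = g.AREL L P from rfl, hARE, zero_add] at hL
  conv_lhs => rw [hF, closedLoopG_lq_eq_lqL g hdom0]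
  exact hL

theorem lq_closedLoop_eq_lqL_add (L : Matrix (Fin m2) (Fin n) ℝ)
    (F₁ K : Matrix (Fin m1) (Fin n) ℝ) :
    (g.lq.A + g.lq.B * fromRows F₁ (g.K2 0 + L) = g.AL L + g.B1 * K + g.B1 * (F₁ - g.K1 0 - K)) ∧
      ∀ l, g.lq.C l + g.lq.D l * fromRows F₁ (g.K2 0 + L)
        = g.CL L l + g.D1 l * K + g.D1 l * (F₁ - g.K1 0 - K) := by
  refine ⟨?_, fun l => ?_⟩
  · rw [lq_B_mul_fromRows]; simp only [lq, AL, Matrix.mul_add, Matrix.mul_sub]; abel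
  · rw [lq_D_mul_fromRows]; simp only [lq, CL, Matrix.mul_add, Matrix.mul_sub]; abel

end GameData

theorem statement11_general {n m1 m2 r : ℕ} (g : GameData n m1 m2 r)
    (hdom0 : g.MemDomG 0)
    (L : Matrix (Fin m2) (Fin n) ℝ)
    (Ptilde : Matrix (Fin n) (Fin n) ℝ) (hPtilde : g.IsStabSolL L Ptilde)
    (P Z : Matrix (Fin n) (Fin n) ℝ) (hP : P.IsSymm) (hZ : Z.IsSymm)
    (hdomP : g.MemDomG P) (hdomPZ : g.MemDomG (P + Z))
    (hinner : g.InnerRiccati P Z)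
    (hle : (Ptilde - (P + Z)).PosSemidef) :
    MSStable
      (g.A + g.B1 * g.K1 (P + Z) + g.B2 * g.K2 0 + g.B2 * L)
      (fun l => g.C l + g.D1 l * g.K1 (P + Z) + g.D2 l * g.K2 0 + g.D2 l * L) := by
  obtain ⟨hPt, hARE, hR11, hstab⟩ := hPtilde
  obtain ⟨hA, hC⟩ := g.lq_closedLoop_eq_lqL_add L (g.K1 (P + Z)) (g.KL L Ptilde)
  have hsplit := g.lq.closedLoopG_add_left (P + Z) (Ptilde - (P + Z))
    (fromRows (g.K1 (P + Z)) (g.K2 0 + L))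
  rw [add_sub_cancel, g.closedLoopG_lq_of_AREL_eq_zero hdom0 hPt hARE hR11, hA, funext hC]
    at hsplit
  have hstable := hstab.of_lyapunovOp_add_mul g.B1 g.D1 (g.K1 (P + Z) - g.K1 0 - g.KL L Ptilde)
    hR11 hle (by
      convert g.closedLoopG_K1_posSemidef hP hZ hdomP hdomPZ hinner (g.K2 0 + L) using 1
      rw [Matrix.mul_neg, Matrix.neg_mul, hsplit]
      abel)
  rw [← hA, funext fun l => (hC l).symm] at hstable
  simpa [GameData.lq, fromCols_mul_fromRows, Matrix.mul_add, add_assoc] using hstable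

/-- Lemma, part (ii): under the stated hypotheses, if `P̃_L ⪰ P + Z`, then
the closed-loop system formed with `K_1(P+Z)` and `K_2(0) + L` is mean-square stable. -/
theorem statement11 {n m1 m2 r : ℕ} (g : GameData n m1 m2 r)
    (hdom0 : g.MemDomG 0)
    (L : Matrix (Fin m2) (Fin n) ℝ) (hL : g.MemA L)
    (Ptilde : Matrix (Fin n) (Fin n) ℝ) (hPtilde : g.IsStabSolL L Ptilde)
    (P Z : Matrix (Fin n) (Fin n) ℝ) (hP : P.IsSymm) (hZ : Z.IsSymm)
    (hdomP : g.MemDomG P) (hdomPZ : g.MemDomG (P + Z))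
    (hinner : g.InnerRiccati P Z)
    (hle : (Ptilde - (P + Z)).PosSemidef) :
    MSStable
      (g.A + g.B1 * g.K1 (P + Z) + g.B2 * g.K2 0 + g.B2 * L)
      (fun l => g.C l + g.D1 l * g.K1 (P + Z) + g.D2 l * g.K2 0 + g.D2 l * L) :=
  statement11_general g hdom0 L Ptilde hPtilde P Z hP hZ hdomP hdomPZ hinner hle
end
end
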